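/- arXiv:1102.3629 — 8 statements merged into one kernel-verified Lean document; each statement's English description precedes it below -/
import Mathlib

section
/- Let r ≥ 1 and n₀ > n₁ > ⋯ > n_r ≥ 0 be a strictly decreasing sequence of natural numbers. Suppose φ₀, …, φ_{r-1} are real numbers with 2^{n_j} φ_j ≡ π (mod 2π) for j = 0, …, r−1. Then for all real φ: ∏_{j=0}^{r-1} |sin(2^{n_{j+1}−1}(φ − φ₀ − ⋯ − φ_j))| ≥ (1/2^{n₀−n_r}) |cos(2^{n₀−1} φ)|. -/
/-!
Write `θⱼ = x - φ₀ - ⋯ - φⱼ₋₁` and `cⱼ = |cos (2 ^ (nⱼ - 1) θⱼ)|`. The congruence on `φⱼ`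
says that `2 ^ (nⱼ - 1) φⱼ` is an odd multiple of `π / 2`, so `cⱼ = |sin (2 ^ (nⱼ - 1) θⱼ₊₁)|`.
Since `|sin (2 ^ k y)| ≤ 2 ^ k |sin y|` and `sin 2y = 2 sin y cos y`, this gives
`cⱼ / 2 ^ nⱼ ≤ |sin (2 ^ (nⱼ₊₁ - 1) θⱼ₊₁)| · cⱼ₊₁ / 2 ^ nⱼ₊₁`, which telescopes;
finally `cᵣ ≤ 1`.
-/

open Real Finset

lemma abs_sin_two_pow_mul_le (k : ℕ) (y : ℝ) : |sin (2 ^ k * y)| ≤ 2 ^ k * |sin y| := by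
  induction k with
  | zero => simp
  | succ k ih =>
    calc |sin (2 ^ (k + 1) * y)| = 2 * |sin (2 ^ k * y)| * |cos (2 ^ k * y)| := by
          rw [pow_succ', mul_assoc, sin_two_mul, abs_mul, abs_mul, abs_two]
      _ ≤ 2 * |sin (2 ^ k * y)| := mul_le_of_le_one_right (by positivity) (abs_cos_le_one _)
      _ ≤ 2 ^ (k + 1) * |sin y| := by rw [pow_succ']; linarith

lemma abs_cos_add_pi_div_two_add_int_mul_pi (t : ℝ) (m : ℤ) :
    |cos (t + (π / 2 + m * π))| = |sin t| := by
  rw [← add_assoc, cos_add_int_mul_pi, cos_add_pi_div_two, abs_mul, abs_neg, abs_zpow, abs_neg,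
    abs_one, one_zpow, one_mul]

lemma le_prod_range_mul_of_le_mul {d s : ℕ → ℝ} {k : ℕ} (hs : ∀ j < k, 0 ≤ s j)
    (h : ∀ j < k, d j ≤ s j * d (j + 1)) : d 0 ≤ (∏ j ∈ range k, s j) * d k := by
  induction k with
  | zero => simp
  | succ k ih =>
    calc d 0 ≤ (∏ j ∈ range k, s j) * d k :=
          ih (fun j hj => hs j (by omega)) (fun j hj => h j (by omega))
      _ ≤ (∏ j ∈ range k, s j) * (s k * d (k + 1)) :=
          mul_le_mul_of_nonneg_left (h k k.lt_succ_self)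
            (prod_nonneg fun j hj => hs j (by simp at hj; omega))
      _ = (∏ j ∈ range (k + 1), s j) * d (k + 1) := by rw [prod_range_succ, mul_assoc]

lemma abs_cos_two_zpow_mul_div_le {a b : ℕ} (hab : b < a) {ψ : ℝ} {m : ℤ}
    (hψ : (2 : ℝ) ^ a * ψ = π + 2 * π * m) (θ : ℝ) :
    |cos ((2 : ℝ) ^ ((a : ℤ) - 1) * θ)| / 2 ^ a ≤
      |sin ((2 : ℝ) ^ ((b : ℤ) - 1) * (θ - ψ))| *
        (|cos ((2 : ℝ) ^ ((b : ℤ) - 1) * (θ - ψ))| / 2 ^ b) := by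
  set y := (2 : ℝ) ^ ((b : ℤ) - 1) * (θ - ψ) with hy
  have hzpow : (2 : ℝ) ^ ((a : ℤ) - 1) = 2 ^ (a - b - 1) * (2 * 2 ^ ((b : ℤ) - 1)) := by
    rw [← zpow_natCast, ← zpow_one_add₀ two_ne_zero, ← zpow_add₀ two_ne_zero]
    congr 1
    omega
  have hpow : (2 : ℝ) ^ a = 2 ^ (a - b - 1) * (2 * 2 ^ b) := by
    rw [← pow_succ', ← pow_add]
    congr 1
    omega
  have hshift : (2 : ℝ) ^ ((a : ℤ) - 1) * ψ = π / 2 + m * π := by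
    rw [zpow_sub_one₀ two_ne_zero, zpow_natCast]
    linear_combination hψ / 2
  have harg : (2 : ℝ) ^ ((a : ℤ) - 1) * θ = 2 ^ (a - b - 1) * (2 * y) + (π / 2 + m * π) := by
    rw [← hshift, hzpow, hy]
    ring
  have hsin := abs_sin_two_pow_mul_le (a - b - 1) (2 * y)
  rw [sin_two_mul, abs_mul, abs_mul, abs_two] at hsin
  calc |cos ((2 : ℝ) ^ ((a : ℤ) - 1) * θ)| / 2 ^ a
      = |sin (2 ^ (a - b - 1) * (2 * y))| / 2 ^ a := by
        rw [harg, abs_cos_add_pi_div_two_add_int_mul_pi]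
    _ ≤ 2 ^ (a - b - 1) * (2 * |sin y| * |cos y|) / 2 ^ a :=
        div_le_div_of_nonneg_right hsin (by positivity)
    _ = |sin y| * (|cos y| / 2 ^ b) := by
        rw [hpow]
        field_simp

theorem trig_product_lower_bound_general (r : ℕ) (n : ℕ → ℕ)
    (hdec : ∀ j, j < r → n (j + 1) < n j)
    (φ : ℕ → ℝ)
    (hφ : ∀ j, j < r → ∃ m : ℤ, (2 : ℝ) ^ n j * φ j = π + 2 * π * m)
    (x : ℝ) :
    (1 / 2 ^ (n 0 - n r)) * |Real.cos ((2 : ℝ) ^ ((n 0 : ℤ) - 1) * x)| ≤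
      ∏ j ∈ range r,
        |Real.sin ((2 : ℝ) ^ ((n (j + 1) : ℤ) - 1) *
          (x - ∑ i ∈ range (j + 1), φ i))| := by
  set P := ∏ j ∈ range r,
    |Real.sin ((2 : ℝ) ^ ((n (j + 1) : ℤ) - 1) * (x - ∑ i ∈ range (j + 1), φ i))|
  set c := fun j => |cos ((2 : ℝ) ^ ((n j : ℤ) - 1) * (x - ∑ i ∈ range j, φ i))|
  have htelescope : c 0 / 2 ^ n 0 ≤ P * (c r / 2 ^ n r) :=
    le_prod_range_mul_of_le_mul (d := fun j => c j / 2 ^ n j)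
      (fun j _ => abs_nonneg _) fun j hj => by
      obtain ⟨m, hm⟩ := hφ j hj
      simpa only [c, sum_range_succ, sub_sub] using
        abs_cos_two_zpow_mul_div_le (hdec j hj) hm (x - ∑ i ∈ range j, φ i)
  have hP : 0 ≤ P := prod_nonneg fun j _ => abs_nonneg _
  have hpow : (2 : ℝ) ^ n 0 ≤ 2 ^ (n 0 - n r) * 2 ^ n r := by
    rw [← pow_add]
    exact pow_le_pow_right₀ one_le_two le_tsub_add
  rw [one_div_mul_eq_div, div_le_iff₀ (by positivity)]
  calc |cos ((2 : ℝ) ^ ((n 0 : ℤ) - 1) * x)| = c 0 / 2 ^ n 0 * 2 ^ n 0 := by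
        simp [c]
    _ ≤ P * (1 / 2 ^ n r) * 2 ^ n 0 := by
        gcongr
        exact htelescope.trans (by gcongr; exact abs_cos_le_one _)
    _ ≤ P * (1 / 2 ^ n r) * (2 ^ (n 0 - n r) * 2 ^ n r) := by gcongr
    _ = P * 2 ^ (n 0 - n r) := by field_simp

theorem trig_product_lower_bound (r : ℕ) (hr : 1 ≤ r) (n : ℕ → ℕ)
    (hdec : ∀ j, j < r → n (j + 1) < n j)
    (φ : ℕ → ℝ)
    (hφ : ∀ j, j < r → ∃ m : ℤ, (2 : ℝ) ^ n j * φ j = π + 2 * π * m)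
    (x : ℝ) :
    (1 / 2 ^ (n 0 - n r)) * |Real.cos ((2 : ℝ) ^ ((n 0 : ℤ) - 1) * x)| ≤
      ∏ j ∈ range r,
        |Real.sin ((2 : ℝ) ^ ((n (j + 1) : ℤ) - 1) *
          (x - ∑ i ∈ range (j + 1), φ i))| :=
  trig_product_lower_bound_general r n hdec φ hφ x
end

section
/- For r = 1: if n₀ > n₁ ≥ 0 are natural numbers and φ₀ is a real number with 2^{n₀} φ₀ ≡ π (mod 2π), then for all real φ: |sin(2^{n₁−1}(φ − φ₀))| ≥ (1/2^{n₀−n₁}) |cos(2^{n₀−1} φ)|. -/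
/-! Since `2^{n₀} φ₀ ≡ π (mod 2π)`, the angle `2^{n₀-1} φ₀` is an odd multiple of `π / 2`, so
`|sin (2^{n₀-1} (φ - φ₀))| = |cos (2^{n₀-1} φ)|`. The angle on the left is `2^{n₀-n₁}` times
`2^{n₁-1} (φ - φ₀)`, and `|sin (k x)| ≤ k |sin x|` for every natural number `k`. -/

open Real

namespace Real

theorem abs_sin_nat_mul_le (n : ℕ) (x : ℝ) : |sin (n * x)| ≤ n * |sin x| := by
  induction n with
  | zero => simp
  | succ n ih =>
    calc |sin ((n + 1 : ℕ) * x)| = |sin (n * x) * cos x + cos (n * x) * sin x| := by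
          push_cast; rw [add_mul, one_mul, sin_add]
      _ ≤ |sin (n * x)| * |cos x| + |cos (n * x)| * |sin x| := by
          rw [← abs_mul, ← abs_mul]; exact abs_add_le _ _
      _ ≤ n * |sin x| * 1 + 1 * |sin x| := by
          gcongr
          exacts [abs_cos_le_one x, abs_cos_le_one _]
      _ = (n + 1 : ℕ) * |sin x| := by push_cast; ring

theorem abs_sin_sub_of_two_mul_eq {θ : ℝ} (m : ℤ) (hθ : 2 * θ = π + 2 * π * m) (x : ℝ) :
    |sin (x - θ)| = |cos x| := by
  have : x - θ = x - π / 2 - m * π := by linarith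
  rw [this, sin_sub_int_mul_pi, sin_sub_pi_div_two, abs_mul, abs_neg, abs_zpow, abs_neg, abs_one,
    one_zpow, one_mul]

end Real

theorem trig_lower_bound_base_case (n₀ n₁ : ℕ) (h : n₁ < n₀) (φ₀ : ℝ)
    (hφ₀ : ∃ m : ℤ, (2 : ℝ) ^ n₀ * φ₀ = π + 2 * π * m) (φ : ℝ) :
    (1 / 2 ^ (n₀ - n₁)) * |Real.cos ((2 : ℝ) ^ ((n₀ : ℤ) - 1) * φ)| ≤
      |Real.sin ((2 : ℝ) ^ ((n₁ : ℤ) - 1) * (φ - φ₀))| := by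
  obtain ⟨m, hm⟩ := hφ₀
  have hθ : 2 * ((2 : ℝ) ^ ((n₀ : ℤ) - 1) * φ₀) = π + 2 * π * m := by
    rw [← mul_assoc, ← zpow_one_add₀ two_ne_zero, add_sub_cancel, zpow_natCast, hm]
  have hscale : (2 : ℝ) ^ ((n₀ : ℤ) - 1) * (φ - φ₀) =
      (2 ^ (n₀ - n₁) : ℕ) * ((2 : ℝ) ^ ((n₁ : ℤ) - 1) * (φ - φ₀)) := by
    rw [Nat.cast_pow, Nat.cast_ofNat, ← zpow_natCast, ← mul_assoc, ← zpow_add₀ two_ne_zero,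
      Nat.cast_sub h.le]
    ring_nf
  rw [one_div, inv_mul_le_iff₀ (by positivity), ← abs_sin_sub_of_two_mul_eq m hθ, ← mul_sub,
    hscale]
  exact_mod_cast abs_sin_nat_mul_le _ _
end

section
/- Let N be a finite set of points in a compact set K ⊂ ℝ, partitioned into N₀, …, N_{s−1}. Then the Lebesgue constant satisfies Δ(N) ≤ Σ_{i=0}^{s−1} (max_{x∈K, a∈N_i} |w_{N∖N_i}(x)| / |w_{N∖N_i}(a)|) · Δ(N_i), where Δ(A) = max_{x∈K} Σ_{a∈A} |ℓ(A,a;x)|. -/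
/-!
On a block `Q ⊆ N`, the fundamental polynomial of `N` at `a ∈ Q` factors as
`ℓ(N,a;x) = ℓ(Q,a;x) · w_{N∖Q}(x) / w_{N∖Q}(a)`. Bounding the nodal ratio by its supremum
over `x ∈ K`, `a ∈ Q` and the remaining sum by `Δ(Q)` bounds the part of the Lebesgue
function of `N` coming from `Q`; summing over the blocks gives the theorem.
-/

open Finset

/-- The nodal function of a finite node set. -/
noncomputable def nodal (A : Finset ℝ) (x : ℝ) : ℝ := ∏ b ∈ A, (x - b)

/-- The fundamental Lagrange interpolation polynomial (as a function) at node `a`. -/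
noncomputable def lagBasis (A : Finset ℝ) (a : ℝ) (x : ℝ) : ℝ := ∏ b ∈ A.erase a, (x - b) / (a - b)

/-- The Lebesgue constant of the node set `A` with respect to the compact set `K`. -/
noncomputable def leb (A : Finset ℝ) (K : Set ℝ) : ℝ :=
  ⨆ x ∈ K, ∑ a ∈ A, |lagBasis A a x|

lemma le_biSup_of_bddAbove_image {α β : Type*} [ConditionallyCompleteLattice α] {f : β → α}
    {s : Set β} (H : BddAbove (f '' s)) {c : β} (hc : c ∈ s) : f c ≤ ⨆ i ∈ s, f i :=
  le_ciSup₂ (f := fun i (_ : i ∈ s) => f i)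
    (H.mono <| Set.iUnion_subset fun i => by rintro _ ⟨hi, rfl⟩; exact ⟨i, hi, rfl⟩) c hc

lemma Real.biSup_nonneg {β : Type*} {s : Set β} {f : β → ℝ} (hf : ∀ i ∈ s, 0 ≤ f i) :
    0 ≤ ⨆ i ∈ s, f i :=
  Real.iSup_nonneg fun i => Real.iSup_nonneg fun hi => hf i hi

lemma Finset.biSup_le_sum {β : Type*} {Q : Finset β} {f : β → ℝ} (hf : ∀ i ∈ Q, 0 ≤ f i) :
    ⨆ i ∈ Q, f i ≤ ∑ i ∈ Q, f i :=
  have hsum : 0 ≤ ∑ i ∈ Q, f i := sum_nonneg hf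
  Real.iSup_le (fun _ => Real.iSup_le (fun hi => single_le_sum hf hi) hsum) hsum

lemma IsCompact.bddAbove_image_of_le {K : Set ℝ} (hK : IsCompact K) {f g : ℝ → ℝ}
    (hg : Continuous g) (hfg : ∀ y ∈ K, f y ≤ g y) : BddAbove (f '' K) := by
  obtain ⟨C, hC⟩ := hK.bddAbove_image hg.continuousOn
  exact ⟨C, by rintro _ ⟨y, hy, rfl⟩; exact (hfg y hy).trans (hC ⟨y, hy, rfl⟩)⟩

lemma continuous_nodal (A : Finset ℝ) : Continuous (nodal A) :=
  continuous_finsetProd _ fun _ _ => continuous_id.sub continuous_const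

lemma continuous_lagBasis (A : Finset ℝ) (a : ℝ) : Continuous (lagBasis A a) :=
  continuous_finsetProd _ fun _ _ => (continuous_id.sub continuous_const).div_const _

lemma lagBasis_eq_mul_nodal_div {N Q : Finset ℝ} (hQN : Q ⊆ N) {a : ℝ} (ha : a ∈ Q) (x : ℝ) :
    lagBasis N a x = lagBasis Q a x * (nodal (N \ Q) x / nodal (N \ Q) a) := by
  have hNa : N.erase a = Q.erase a ∪ N \ Q := by
    conv_lhs => rw [← union_sdiff_of_subset hQN]
    rw [erase_union_distrib, erase_eq_of_notMem fun h => (mem_sdiff.mp h).2 ha]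
  have hdisj : Disjoint (Q.erase a) (N \ Q) := disjoint_sdiff.mono_left (erase_subset _ _)
  rw [lagBasis, hNa, prod_union hdisj, lagBasis, nodal, nodal, ← prod_div_distrib]

lemma leb_nonneg (A : Finset ℝ) (K : Set ℝ) : 0 ≤ leb A K :=
  Real.biSup_nonneg fun _ _ => sum_nonneg fun _ _ => abs_nonneg _

lemma sum_abs_lagBasis_le_leb {K : Set ℝ} (hK : IsCompact K) (A : Finset ℝ) {x : ℝ}
    (hx : x ∈ K) : ∑ a ∈ A, |lagBasis A a x| ≤ leb A K :=
  le_biSup_of_bddAbove_image (hK.bddAbove_image_of_le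
    (continuous_finsetSum _ fun a _ => (continuous_lagBasis A a).abs) fun _ _ => le_rfl) hx

section NodalRatio

variable {K : Set ℝ} (B Q : Finset ℝ)

lemma biSup_abs_nodal_div_nonneg :
    0 ≤ ⨆ y ∈ K, ⨆ a ∈ Q, |nodal B y| / |nodal B a| :=
  Real.biSup_nonneg fun _ _ => Real.biSup_nonneg fun _ _ => by positivity

lemma abs_nodal_div_le_biSup (hK : IsCompact K) {x a : ℝ} (hx : x ∈ K) (ha : a ∈ Q) :
    |nodal B x| / |nodal B a| ≤ ⨆ y ∈ K, ⨆ a ∈ Q, |nodal B y| / |nodal B a| := by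
  have hratio_nonneg : ∀ y, ∀ a ∈ Q, 0 ≤ |nodal B y| / |nodal B a| := fun _ _ _ => by positivity
  have hbdd : BddAbove ((fun y => ⨆ a ∈ Q, |nodal B y| / |nodal B a|) '' K) :=
    hK.bddAbove_image_of_le
      (continuous_finsetSum _ fun a _ => (continuous_nodal B).abs.div_const _)
      fun y _ => biSup_le_sum (hratio_nonneg y)
  calc |nodal B x| / |nodal B a| ≤ ⨆ a ∈ Q, |nodal B x| / |nodal B a| :=
        le_biSup_of_bddAbove_image (f := fun a => |nodal B x| / |nodal B a|) (s := ↑Q)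
          (Q.finite_toSet.image _).bddAbove ha
    _ ≤ _ := le_biSup_of_bddAbove_image hbdd hx

end NodalRatio

lemma sum_abs_lagBasis_le_of_subset {K : Set ℝ} (hK : IsCompact K) {N Q : Finset ℝ}
    (hQN : Q ⊆ N) {x : ℝ} (hx : x ∈ K) :
    ∑ a ∈ Q, |lagBasis N a x| ≤
      (⨆ y ∈ K, ⨆ a ∈ Q, |nodal (N \ Q) y| / |nodal (N \ Q) a|) * leb Q K := by
  set M := ⨆ y ∈ K, ⨆ a ∈ Q, |nodal (N \ Q) y| / |nodal (N \ Q) a|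
  calc ∑ a ∈ Q, |lagBasis N a x|
      = ∑ a ∈ Q, |lagBasis Q a x| * (|nodal (N \ Q) x| / |nodal (N \ Q) a|) :=
        sum_congr rfl fun a ha => by rw [lagBasis_eq_mul_nodal_div hQN ha, abs_mul, abs_div]
    _ ≤ ∑ a ∈ Q, |lagBasis Q a x| * M :=
        sum_le_sum fun a ha => mul_le_mul_of_nonneg_left
          (abs_nodal_div_le_biSup _ _ hK hx ha) (abs_nonneg _)
    _ = M * ∑ a ∈ Q, |lagBasis Q a x| := by rw [← sum_mul, mul_comm]
    _ ≤ M * leb Q K :=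
        mul_le_mul_of_nonneg_left (sum_abs_lagBasis_le_leb hK Q hx)
          (biSup_abs_nodal_div_nonneg _ _)

theorem lebesgue_constant_partition_bound_general (K : Set ℝ) (hK : IsCompact K)
    (N : Finset ℝ) (s : ℕ) (P : ℕ → Finset ℝ)
    (hcover : N = (Finset.range s).biUnion P)
    (hdisj : ∀ i j, i < s → j < s → i ≠ j → Disjoint (P i) (P j)) :
    leb N K ≤ ∑ i ∈ Finset.range s,
      (⨆ x ∈ K, ⨆ a ∈ P i, |nodal (N \ P i) x| / |nodal (N \ P i) a|) *
        leb (P i) K := by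
  have hPD : (range s : Set ℕ).PairwiseDisjoint P := fun i hi j hj hij =>
    hdisj i j (mem_range.mp hi) (mem_range.mp hj) hij
  have hRHS_nonneg : 0 ≤ ∑ i ∈ range s,
      (⨆ x ∈ K, ⨆ a ∈ P i, |nodal (N \ P i) x| / |nodal (N \ P i) a|) * leb (P i) K :=
    sum_nonneg fun i _ => mul_nonneg (biSup_abs_nodal_div_nonneg _ _) (leb_nonneg _ _)
  refine Real.iSup_le (fun x => Real.iSup_le (fun hx => ?_) hRHS_nonneg) hRHS_nonneg
  calc ∑ a ∈ N, |lagBasis N a x| = ∑ i ∈ range s, ∑ a ∈ P i, |lagBasis N a x| := by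
        rw [← sum_biUnion hPD, ← hcover]
    _ ≤ _ := sum_le_sum fun i hi =>
        sum_abs_lagBasis_le_of_subset hK (hcover ▸ subset_biUnion_of_mem P hi) hx

theorem lebesgue_constant_partition_bound (K : Set ℝ) (hK : IsCompact K)
    (N : Finset ℝ) (hNK : (N : Set ℝ) ⊆ K) (s : ℕ) (P : ℕ → Finset ℝ)
    (hcover : N = (Finset.range s).biUnion P)
    (hdisj : ∀ i j, i < s → j < s → i ≠ j → Disjoint (P i) (P j)) :
    leb N K ≤ ∑ i ∈ Finset.range s,
      (⨆ x ∈ K, ⨆ a ∈ P i, |nodal (N \ P i) x| / |nodal (N \ P i) a|) *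
        leb (P i) K :=
  lebesgue_constant_partition_bound_general K hK N s P hcover hdisj
end

section
/- For d ≥ 2 and i with 1 ≤ i ≤ d−1, the derivative of the nodal polynomial of the Chebyshev–Lobatto points 𝓛_d at the interior node a_i = cos(iπ/d) satisfies |w'_{𝓛_d}(a_i)| = 2^{1−d} d. -/
/-!
The Lobatto points are exactly the zeros of `(X² - 1) U_{d-1}`, since
`(cos² θ - 1) U_{d-1}(cos θ) = -sin θ sin (d θ)`; comparing leading coefficients gives
`w = 2^{1-d} (X² - 1) U_{d-1}`. The Chebyshev identity `(n+1) T_{n+1} = X U_n - (1 - X²) U_n'`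
turns the derivative into `((X² - 1) U_n)' = X U_n + (n+1) T_{n+1}`. At an interior node
`U_{d-1}` vanishes and `T_d = ±1`, so `|w'| = 2^{1-d} d`.
-/

open Real Finset

/-- The Chebyshev–Lobatto points of degree `d`. -/
noncomputable def lobatto (d : ℕ) : Finset ℝ :=
  (Finset.range (d + 1)).image (fun j : ℕ => Real.cos (j * π / d))

open Polynomial Polynomial.Chebyshev

namespace Polynomial.Chebyshev

section CommRing

variable (R : Type*) [CommRing R]

theorem derivative_X_sq_sub_one_mul_U (n : ℤ) :
    derivative ((X ^ 2 - 1) * U R n) = X * U R n + ((n : R[X]) + 1) * T R (n + 1) := by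
  rw [derivative_mul, add_one_mul_T_eq_poly_in_U]
  simp only [derivative_sub, derivative_X_pow, derivative_one, Nat.cast_ofNat, map_ofNat]
  ring

theorem monic_X_sq_sub_one : (X ^ 2 - 1 : R[X]).Monic := by
  simpa using monic_X_pow_sub_C (1 : R) two_ne_zero

variable [IsDomain R] [NeZero (2 : R)]

theorem natDegree_X_sq_sub_one_mul_U (n : ℕ) :
    ((X ^ 2 - 1) * U R n).natDegree = n + 2 := by
  rw [(monic_X_sq_sub_one R).natDegree_mul' (U_ne_zero R n (by omega)), natDegree_U_natCast,
    ← map_one Polynomial.C, natDegree_X_pow_sub_C, add_comm]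

theorem leadingCoeff_X_sq_sub_one_mul_U (n : ℕ) :
    ((X ^ 2 - 1) * U R n).leadingCoeff = 2 ^ n := by
  rw [leadingCoeff_monic_mul (monic_X_sq_sub_one R), leadingCoeff_U_natCast]

end CommRing

theorem eval_X_sq_sub_one_mul_U_real_cos (θ : ℝ) (n : ℤ) :
    ((X ^ 2 - 1) * U ℝ n).eval (cos θ) = -(sin θ * sin ((n + 1) * θ)) := by
  rw [← U_real_cos, eval_mul]
  simp only [eval_sub, eval_pow, eval_X, eval_one]
  linear_combination (U ℝ n).eval (cos θ) * sin_sq_add_cos_sq θ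

theorem eval_U_real_cos_eq_zero {n k : ℕ} (hk : k < n) :
    (U ℝ n).eval (cos ((k + 1) * π / (n + 1))) = 0 := by
  rw [← IsRoot, ← mem_roots (U_ne_zero ℝ n (by omega)), roots_U_real]
  simpa using ⟨k, hk, rfl⟩

end Polynomial.Chebyshev

theorem card_lobatto {d : ℕ} (hd : d ≠ 0) : #(lobatto d) = d + 1 := by
  rw [lobatto, card_image_of_injOn, card_range]
  refine injOn_cos.comp ?_ fun j hj => Set.mem_Icc.mpr ⟨by positivity, ?_⟩
  · intro a _ b _ hab
    field_simp at hab
    exact_mod_cast hab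
  · have : (j : ℝ) ≤ d := by exact_mod_cast Nat.lt_succ_iff.mp (mem_range.mp hj)
    rw [div_le_iff₀ (by positivity)]
    nlinarith [pi_pos]

theorem roots_X_sq_sub_one_mul_U_real (n : ℕ) :
    ((X ^ 2 - 1) * U ℝ n).roots = (lobatto (n + 1)).val := by
  refine roots_eq_of_degree_eq_card (fun x hx => ?_) ?_
  · obtain ⟨j, -, rfl⟩ := mem_image.mp hx
    rw [eval_X_sq_sub_one_mul_U_real_cos, neg_eq_zero, mul_eq_zero]
    exact .inr <| sin_eq_zero_iff.mpr ⟨j, by push_cast; field_simp⟩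
  · rw [card_lobatto n.succ_ne_zero, degree_eq_natDegree
      ((monic_X_sq_sub_one ℝ).mul_right_ne_zero (U_ne_zero ℝ n (by omega))),
      natDegree_X_sq_sub_one_mul_U]

theorem nodal_lobatto (n : ℕ) :
    Lagrange.nodal (lobatto (n + 1)) id =
      Polynomial.C ((2 : ℝ) ^ n)⁻¹ * ((X ^ 2 - 1) * U ℝ n) := by
  have h := C_leadingCoeff_mul_prod_multiset_X_sub_C (p := (X ^ 2 - 1) * U ℝ n) (by
    rw [roots_X_sq_sub_one_mul_U_real, natDegree_X_sq_sub_one_mul_U, card_val,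
      card_lobatto n.succ_ne_zero])
  rw [roots_X_sq_sub_one_mul_U_real, leadingCoeff_X_sq_sub_one_mul_U,
    ← prod_eq_multiset_prod] at h
  rw [← h, ← mul_assoc, ← Polynomial.C_mul, inv_mul_cancel₀ (by positivity), Polynomial.C_1,
    one_mul]
  rfl

theorem eval_derivative_nodal_lobatto {n k : ℕ} (hk : k < n) :
    (derivative (Lagrange.nodal (lobatto (n + 1)) id)).eval (cos ((k + 1) * π / (n + 1))) =
      ((2 : ℝ) ^ n)⁻¹ * ((n + 1) * (-1) ^ (k + 1)) := by
  have hT : (T ℝ (n + 1 : ℕ)).eval (cos ((k + 1 : ℕ) * π / (n + 1 : ℕ))) = (-1) ^ (k + 1) := by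
    rw [eval_T_real_cos_int_mul_pi_div n.succ_ne_zero, Int.cast_negOnePow_natCast]
  push_cast at hT
  rw [nodal_lobatto, derivative_C_mul, derivative_X_sq_sub_one_mul_U, eval_mul, eval_C]
  simp [eval_U_real_cos_eq_zero hk, hT]

theorem abs_deriv_nodal_lobatto_general (d : ℕ) (i : ℕ)
    (hi1 : 1 ≤ i) (hi2 : i ≤ d - 1) :
    |deriv (fun x : ℝ => ∏ a ∈ lobatto d, (x - a)) (Real.cos (i * π / d))| =
      (2 : ℝ) ^ ((1 : ℤ) - (d : ℤ)) * d := by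
  obtain ⟨n, rfl⟩ : ∃ n, d = n + 1 := ⟨d - 1, by omega⟩
  obtain ⟨k, rfl⟩ : ∃ k, i = k + 1 := ⟨i - 1, by omega⟩
  have hnodal : (fun x : ℝ => ∏ a ∈ lobatto (n + 1), (x - a)) =
      fun x => (Lagrange.nodal (lobatto (n + 1)) id).eval x := by
    simp [Lagrange.eval_nodal]
  rw [hnodal, Polynomial.deriv]
  push_cast
  rw [eval_derivative_nodal_lobatto (by omega : k < n), abs_mul, abs_mul, abs_pow, abs_neg,
    abs_one, one_pow, mul_one, abs_inv, abs_pow, abs_two, abs_of_nonneg (by positivity),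
    show (1 : ℤ) - (n + 1) = -n by ring, zpow_neg, zpow_natCast]

theorem abs_deriv_nodal_lobatto (d : ℕ) (hd : 2 ≤ d) (i : ℕ)
    (hi1 : 1 ≤ i) (hi2 : i ≤ d - 1) :
    |deriv (fun x : ℝ => ∏ a ∈ lobatto d, (x - a)) (Real.cos (i * π / d))| =
      (2 : ℝ) ^ ((1 : ℤ) - (d : ℤ)) * d :=
  abs_deriv_nodal_lobatto_general d i hi1 hi2
end

section
/- With 𝒯_d^{(β)} = {cos β_j : β_j = β + 2jπ/d, j=0,…,d−1} and sin(dβ) ≠ 0, the fundamental Lagrange polynomial satisfies, for x = cos t: ℓ(𝒯_d^{(β)}, cos β_j; x) = (sin β_j / (d sin dβ)) · sin(d(t+β)/2) sin(d(t−β)/2) / (sin((t+β_j)/2) sin((t−β_j)/2)), whenever the denominators are nonzero. -/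
open Real Finset

/-- The modified Chebyshev points of degree `d` with parameter `β`. -/
noncomputable def modCheb (d : ℕ) (β : ℝ) : Finset ℝ :=
  (Finset.range d).image (fun j : ℕ => Real.cos (β + 2 * j * π / d))

/-!
The nodes `cos β_j` are roots of `p = T_d - cos (dβ)`, because `T_d (cos θ) = cos (dθ)` and
`dβ_j ≡ dβ (mod 2π)`; when `sin (dβ) ≠ 0` they are pairwise distinct, so they are all `d` roots
of `p`, whose leading coefficient is `2^(d-1)`. Hence `ℓ_j (x) = p x / ((x - x_j) p' (x_j))`.
From `T_d' = d U_(d-1)` and `U_(d-1) (cos θ) sin θ = sin (dθ)` we get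
`p' (cos β_j) = d sin (dβ) / sin β_j`, and both `cos (dt) - cos (dβ)` and `cos t - cos β_j`
factor as products of sines.
-/

open Polynomial Lagrange

theorem Polynomial.eq_C_leadingCoeff_mul_nodal_of_card_eq_degree {R : Type*} [CommRing R]
    [IsDomain R] {p : R[X]} {S : Finset R} (hS : ∀ x ∈ S, p.eval x = 0) (hcard : #S = p.degree) :
    p = C p.leadingCoeff * nodal S id := by
  have hroots : p.roots = S.val := roots_eq_of_degree_eq_card hS hcard
  have hroots_card : Multiset.card p.roots = p.natDegree := by
    rw [hroots, Finset.card_val, natDegree_eq_of_degree_eq_some hcard.symm]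
  conv_lhs => rw [← C_leadingCoeff_mul_prod_multiset_X_sub_C hroots_card]
  rw [hroots, nodal_eq]
  rfl

theorem lagBasis_eq_eval_div_derivative {A : Finset ℝ} {a x : ℝ} (ha : a ∈ A) (hx : x ≠ a)
    {p : ℝ[X]} {c : ℝ} (hc : c ≠ 0) (hp : p = C c * nodal A id) :
    lagBasis A a x = p.eval x / ((x - a) * p.derivative.eval a) := by
  have hnum : p.eval x = c * ((x - a) * ∏ b ∈ A.erase a, (x - b)) := by
    rw [hp, eval_mul, eval_C, nodal_eq_mul_nodal_erase (v := id) ha]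
    simp [eval_nodal]
  have hden : p.derivative.eval a = c * ∏ b ∈ A.erase a, (a - b) := by
    rw [hp, derivative_C_mul, eval_C_mul, ← id_eq a, eval_nodal_derivative_eval_node_eq ha,
      eval_nodal]
    rfl
  rw [lagBasis, prod_div_distrib, hnum, hden, mul_left_comm (x - a), ← mul_assoc, ← mul_assoc,
    mul_div_mul_left _ _ (mul_ne_zero hc (sub_ne_zero.mpr hx))]

theorem sin_nat_mul_modCheb_angle {d : ℕ} (hd : d ≠ 0) (β : ℝ) (j : ℕ) :
    sin (d * (β + 2 * j * π / d)) = sin (d * β) := by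
  rw [← sin_add_nat_mul_two_pi (d * β) j]
  congr 1
  field_simp

theorem cos_nat_mul_modCheb_angle {d : ℕ} (hd : d ≠ 0) (β : ℝ) (j : ℕ) :
    cos (d * (β + 2 * j * π / d)) = cos (d * β) := by
  rw [← cos_add_nat_mul_two_pi (d * β) j]
  congr 1
  field_simp

theorem injOn_cos_modCheb_angle {d : ℕ} {β : ℝ} (hβ : sin (d * β) ≠ 0) :
    Set.InjOn (fun k : ℕ => cos (β + 2 * k * π / d)) (range d) := by
  intro a ha b hb hab
  have hd : (d : ℝ) ≠ 0 := by
    rintro h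
    simp [h] at hβ
  rw [coe_range, Set.mem_Iio] at ha hb
  obtain ⟨n, h | h⟩ := Real.cos_eq_cos_iff.mp hab
  · have hba : (b : ℤ) = n * d + a := by
      field_simp at h
      exact_mod_cast (by nlinarith [Real.pi_pos] : (b : ℝ) = n * d + a)
    have hdvd : (d : ℤ) ∣ b - a := ⟨n, by rw [hba]; ring⟩
    have := Int.eq_zero_of_abs_lt_dvd hdvd (by rw [abs_lt]; omega)
    omega
  · -- `β_a ≡ -β_b (mod 2π)` would put `dβ` in `πℤ`
    refine absurd ?_ hβ
    have hdβ : (d : ℝ) * β = ((n * d - a - b : ℤ) : ℝ) * π := by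
      field_simp at h
      push_cast
      linear_combination h / 2
    rw [hdβ, sin_int_mul_pi]

theorem card_modCheb {d : ℕ} {β : ℝ} (hβ : sin (d * β) ≠ 0) : #(modCheb d β) = d := by
  rw [modCheb, card_image_of_injOn (injOn_cos_modCheb_angle hβ), card_range]

theorem T_sub_C_cos_eq_nodal_modCheb {d : ℕ} (hd : d ≠ 0) {β : ℝ} (hβ : sin (d * β) ≠ 0) :
    Chebyshev.T ℝ d - C (cos (d * β)) = C (2 ^ (d - 1)) * nodal (modCheb d β) id := by
  have hdeg : (Chebyshev.T ℝ d - C (cos (d * β))).degree = d := by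
    rw [degree_sub_C] <;> simp [Nat.pos_of_ne_zero hd]
  have hlc : (Chebyshev.T ℝ d - C (cos (d * β))).leadingCoeff = 2 ^ (d - 1) := by
    rw [leadingCoeff_sub_of_degree_lt, Chebyshev.leadingCoeff_T, Int.natAbs_natCast]
    exact degree_C_le.trans_lt (by simpa using Nat.pos_of_ne_zero hd)
  rw [← hlc]
  refine eq_C_leadingCoeff_mul_nodal_of_card_eq_degree ?_ (by rw [card_modCheb hβ, hdeg])
  simp only [modCheb, mem_image, mem_range]
  rintro _ ⟨k, -, rfl⟩
  rw [eval_sub, eval_C, Chebyshev.T_real_cos, Int.cast_natCast, cos_nat_mul_modCheb_angle hd,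
    sub_self]

theorem eval_derivative_T_mul_sin (d : ℕ) (θ : ℝ) :
    (Chebyshev.T ℝ d).derivative.eval (cos θ) * sin θ = d * sin (d * θ) := by
  rw [Chebyshev.T_derivative_eq_U, eval_mul, mul_assoc, Chebyshev.U_real_cos]
  simp

theorem lagBasis_modCheb_formula (d : ℕ) (hd : 1 ≤ d) (β : ℝ)
    (hβ : Real.sin (d * β) ≠ 0) (j : ℕ) (hj : j < d) (t : ℝ)
    (h1 : Real.sin ((t + (β + 2 * j * π / d)) / 2) ≠ 0)
    (h2 : Real.sin ((t - (β + 2 * j * π / d)) / 2) ≠ 0) :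
    lagBasis (modCheb d β) (Real.cos (β + 2 * j * π / d)) (Real.cos t) =
      (Real.sin (β + 2 * j * π / d) / (d * Real.sin (d * β))) *
        (Real.sin (d * (t + β) / 2) * Real.sin (d * (t - β) / 2)) /
        (Real.sin ((t + (β + 2 * j * π / d)) / 2) *
          Real.sin ((t - (β + 2 * j * π / d)) / 2)) := by
  have hd0 : d ≠ 0 := Nat.one_le_iff_ne_zero.mp hd
  set βj := β + 2 * j * π / d
  have hnode : cos βj ∈ modCheb d β := mem_image_of_mem _ (mem_range.mpr hj)
  have hsub : cos t - cos βj = -2 * sin ((t + βj) / 2) * sin ((t - βj) / 2) := cos_sub_cos t βj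
  have hderiv : (Chebyshev.T ℝ d).derivative.eval (cos βj) * sin βj = d * sin (d * β) := by
    rw [eval_derivative_T_mul_sin, sin_nat_mul_modCheb_angle hd0]
  have hsinβj : sin βj ≠ 0 := by
    rintro h
    simp [h, hd0, hβ] at hderiv
  rw [lagBasis_eq_eval_div_derivative hnode (sub_ne_zero.mp (by simp [hsub, h1, h2]))
    (pow_ne_zero _ two_ne_zero) (T_sub_C_cos_eq_nodal_modCheb hd0 hβ), derivative_sub,
    derivative_C, sub_zero, eval_sub, eval_C, Chebyshev.T_real_cos, Int.cast_natCast,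
    cos_sub_cos, hsub, eq_div_of_mul_eq hsinβj hderiv]
  field_simp
end

section
/- Let E be a Leja sequence for the unit disk and n ∈ ℕ. Then the set of real parts {Re(e_k) : 0 ≤ k ≤ 2^{n+1}−1} equals the Chebyshev–Lobatto set 𝓛_{2^n} = {cos(jπ/2^n) : j = 0,…,2^n}; in particular it has exactly 2^n + 1 elements. -/
/-!
By induction on `N`, the first `2 ^ N` points of a Leja sequence are the `2 ^ N`-th roots of
unity. If the first `d = 2 ^ N` points are the `d`-th roots of unity, their distance product is
`‖z ^ d - 1‖`, so the next point `ρ` satisfies `ρ ^ d = -1`; the following `d` points, divided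
by `ρ`, then form a Leja sequence for the weight `‖w ^ d + 1‖`. The induction therefore runs over
weighted Leja sequences, with weights that are invariant under `2 ^ N`-th roots of unity and
maximal at `1` on the disk.

The real parts of the `2 ^ (n + 1)`-st roots of unity `exp (i j π / 2 ^ n)` are the numbers
`cos (j π / 2 ^ n)`, and `j`, `2 ^ (n + 1) - j` give the same value, leaving the `2 ^ n + 1`
distinct values with `0 ≤ j ≤ 2 ^ n`.
-/

open Finset Real

/-- A Leja sequence for the unit disk `D = {|z| ≤ 1}`: it starts at `1`, stays in `D`,
and each point maximizes the product of distances to the previous points over `D`. -/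
def IsLejaSeq (e : ℕ → ℂ) : Prop :=
  e 0 = 1 ∧ (∀ k, ‖e k‖ ≤ 1) ∧
    ∀ j, 1 ≤ j → ∀ z : ℂ, ‖z‖ ≤ 1 →
      ∏ m ∈ Finset.range j, ‖z - e m‖ ≤
        ∏ m ∈ Finset.range j, ‖e j - e m‖

open Polynomial

lemma Complex.prod_sub_nthRootsFinset {N : ℕ} (hN : 0 < N) (z : ℂ) :
    ∏ x ∈ nthRootsFinset N (1 : ℂ), (z - x) = z ^ N - 1 := by
  simpa [eval_prod] using
    (congrArg (eval z) (X_pow_sub_one_eq_prod hN (Complex.isPrimitiveRoot_exp N hN.ne'))).symm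

lemma nthRootsFinset_two_mul {K : Type*} [Field K] [DecidableEq K] {d : ℕ} (hd : 0 < d) {ρ : K}
    (hρ : ρ ^ d = -1) :
    nthRootsFinset (2 * d) (1 : K) =
      nthRootsFinset d (1 : K) ∪ (nthRootsFinset d (1 : K)).image (ρ * ·) := by
  have hρ0 : ρ ≠ 0 := by rintro rfl; simp [zero_pow hd.ne'] at hρ
  ext x
  simp only [mem_union, mem_image, mem_nthRootsFinset (by omega : 0 < 2 * d),
    mem_nthRootsFinset hd]
  constructor
  · intro hx
    rcases mul_self_eq_one_iff.mp (by rwa [← pow_add, ← two_mul] : x ^ d * x ^ d = 1) with h | h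
    · exact Or.inl h
    · refine Or.inr ⟨ρ⁻¹ * x, ?_, by field_simp⟩
      rw [mul_pow, inv_pow, hρ, h]
      norm_num
  · rintro (h | ⟨y, hy, rfl⟩)
    · rw [pow_mul', h, one_pow]
    · rw [pow_mul', mul_pow, hρ, hy]
      norm_num

lemma Complex.eq_neg_one_of_norm_le_one_of_two_le_norm_sub_one {x : ℂ} (hx : ‖x‖ ≤ 1)
    (h2 : 2 ≤ ‖x - 1‖) : x = -1 := by
  have h4 : 4 ≤ Complex.normSq (x - 1) := by
    nlinarith [Complex.sq_norm (x - 1), norm_nonneg (x - 1)]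
  have h1 : Complex.normSq x ≤ 1 := by
    nlinarith [Complex.sq_norm x, norm_nonneg x]
  simp only [Complex.normSq_apply, Complex.sub_re, Complex.one_re, Complex.sub_im,
    Complex.one_im] at h4 h1
  apply Complex.ext <;> simp <;> nlinarith

lemma image_re_nthRootsFinset_two_mul {m : ℕ} (hm : 0 < m) :
    (nthRootsFinset (2 * m) (1 : ℂ)).image Complex.re =
      (range (m + 1)).image (fun j : ℕ => cos (j * π / m)) := by
  have hM : 0 < 2 * m := by omega
  have : NeZero (2 * m) := ⟨hM.ne'⟩
  have hζ := Complex.isPrimitiveRoot_exp (2 * m) hM.ne'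
  have re_pow (j : ℕ) :
      (Complex.exp (2 * π * Complex.I / (2 * m : ℕ)) ^ j).re = cos (j * π / m) := by
    have harg : (j : ℂ) * (2 * π * Complex.I / (2 * m : ℕ)) = (j * π / m : ℝ) * Complex.I := by
      push_cast
      field_simp
    rw [← Complex.exp_nat_mul, harg, Complex.exp_ofReal_mul_I_re]
  ext r
  simp only [mem_image, mem_range, mem_nthRootsFinset hM]
  constructor
  · rintro ⟨x, hx, rfl⟩
    obtain ⟨i, hi, rfl⟩ := hζ.eq_pow_of_pow_eq_one hx
    rw [re_pow]
    rcases le_or_gt i m with him | him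
    · exact ⟨i, by omega, rfl⟩
    · refine ⟨2 * m - i, by omega, ?_⟩
      rw [Nat.cast_sub hi.le, ← cos_two_pi_sub]
      push_cast
      congr 1
      field_simp
      ring
  · rintro ⟨j, -, rfl⟩
    refine ⟨_, ?_, re_pow j⟩
    rw [← pow_mul, pow_mul', hζ.pow_eq_one, one_pow]

lemma card_image_range_cos {m : ℕ} (hm : 0 < m) :
    ((range (m + 1)).image (fun j : ℕ => cos (j * π / m))).card = m + 1 := by
  rw [card_image_of_injOn, card_range]
  have mem_Icc {j : ℕ} (hj : j < m + 1) : (j * π / m) ∈ Set.Icc 0 π := by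
    refine ⟨by positivity, ?_⟩
    rw [div_le_iff₀ (by positivity), mul_comm]
    gcongr
    exact_mod_cast Nat.lt_succ_iff.mp hj
  intro a ha b hb hab
  have := injOn_cos (mem_Icc (mem_range.mp ha)) (mem_Icc (mem_range.mp hb)) hab
  field_simp at this
  exact_mod_cast this

lemma Complex.norm_eq_one_of_pow_eq_neg_one {x : ℂ} {d : ℕ} (hd : d ≠ 0) (hx : x ^ d = -1) :
    ‖x‖ = 1 :=
  (pow_eq_one_iff_of_nonneg (norm_nonneg x) hd).mp (by rw [← norm_pow, hx, norm_neg, norm_one])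

structure IsWeightedLejaUpTo (W : ℂ → ℝ) (N : ℕ) (h : ℕ → ℂ) : Prop where
  zero : h 0 = 1
  norm_le_one : ∀ m, ‖h m‖ ≤ 1
  maximal : ∀ j, 1 ≤ j → j < N → ∀ z : ℂ, ‖z‖ ≤ 1 →
    W z * ∏ m ∈ range j, ‖z - h m‖ ≤ W (h j) * ∏ m ∈ range j, ‖h j - h m‖

structure IsLejaWeight (N : ℕ) (W : ℂ → ℝ) : Prop where
  pos_one : 0 < W 1
  le_one : ∀ z, ‖z‖ ≤ 1 → W z ≤ W 1
  mul_root : ∀ ζ z, ζ ^ 2 ^ N = 1 → W (ζ * z) = W z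

namespace IsLejaWeight

variable {N : ℕ} {W : ℂ → ℝ}

lemma const_one (N : ℕ) : IsLejaWeight N fun _ => 1 :=
  ⟨one_pos, fun _ _ => le_rfl, fun _ _ _ => rfl⟩

lemma mono {M : ℕ} (hW : IsLejaWeight M W) (hNM : N ≤ M) : IsLejaWeight N W := by
  refine ⟨hW.pos_one, hW.le_one, fun ζ z hζ => hW.mul_root ζ z ?_⟩
  obtain ⟨c, hc⟩ := Nat.pow_dvd_pow 2 hNM
  rw [hc, pow_mul, hζ, one_pow]

lemma mul_norm_pow_add_one (hW : IsLejaWeight (N + 1) W) :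
    IsLejaWeight N fun w => ‖w ^ 2 ^ N + 1‖ * W w where
  pos_one := by norm_num [hW.pos_one]
  le_one z hz := by
    have hz' : ‖z ^ 2 ^ N + 1‖ ≤ 2 := by
      calc ‖z ^ 2 ^ N + 1‖ ≤ ‖z‖ ^ 2 ^ N + 1 :=
            (norm_add_le _ _).trans_eq (by rw [norm_pow, norm_one])
        _ ≤ 2 := by linarith [pow_le_one₀ (norm_nonneg z) hz (n := 2 ^ N)]
    calc ‖z ^ 2 ^ N + 1‖ * W z ≤ ‖z ^ 2 ^ N + 1‖ * W 1 := by gcongr; exact hW.le_one z hz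
      _ ≤ 2 * W 1 := by gcongr; exact hW.pos_one.le
      _ = ‖(1 : ℂ) ^ 2 ^ N + 1‖ * W 1 := by norm_num
  mul_root ζ z hζ := by
    rw [mul_pow, hζ, one_mul, hW.mul_root ζ z (by rw [pow_succ, pow_mul, hζ, one_pow])]

end IsLejaWeight

lemma prod_norm_sub_eq_norm_pow_sub_one {h : ℕ → ℂ} {d : ℕ} (hd : 0 < d)
    (hh : (range d).image h = nthRootsFinset d (1 : ℂ)) (z : ℂ) :
    ∏ m ∈ range d, ‖z - h m‖ = ‖z ^ d - 1‖ := by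
  have hinj : Set.InjOn h (range d) := injOn_of_card_image_eq <| by
    rw [hh, (Complex.isPrimitiveRoot_exp d hd.ne').card_nthRootsFinset, card_range]
  rw [← norm_prod, ← Complex.prod_sub_nthRootsFinset hd, ← hh, prod_image hinj]

namespace IsWeightedLejaUpTo

variable {N : ℕ} {W : ℂ → ℝ} {h : ℕ → ℂ}

lemma mono {M : ℕ} (hh : IsWeightedLejaUpTo W M h) (hNM : N ≤ M) : IsWeightedLejaUpTo W N h :=
  ⟨hh.zero, hh.norm_le_one, fun j hj hjN => hh.maximal j hj (by omega)⟩

/-- The point `h (2 ^ N)` maximizes `W z * ‖z ^ 2 ^ N - 1‖`, whose maximum `2 * W 1` on the disk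
is attained at the `2 ^ N`-th roots of `-1` and only there. -/
lemma pow_eq_neg_one (hW : IsLejaWeight (N + 1) W) (hh : IsWeightedLejaUpTo W (2 ^ (N + 1)) h)
    (hfirst : (range (2 ^ N)).image h = nthRootsFinset (2 ^ N) (1 : ℂ)) :
    h (2 ^ N) ^ 2 ^ N = -1 := by
  have hd : 0 < 2 ^ N := by positivity
  obtain ⟨w, hw⟩ := IsAlgClosed.exists_pow_nat_eq (-1 : ℂ) hd
  have hWw : W w = W 1 := by
    simpa using hW.mul_root w 1 (by rw [pow_succ, pow_mul, hw]; norm_num)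
  have hmax := hh.maximal (2 ^ N) hd.nat_succ_le (Nat.pow_lt_pow_succ one_lt_two) w
    (Complex.norm_eq_one_of_pow_eq_neg_one hd.ne' hw).le
  rw [prod_norm_sub_eq_norm_pow_sub_one hd hfirst, prod_norm_sub_eq_norm_pow_sub_one hd hfirst,
    hWw, hw] at hmax
  have h2 : 2 ≤ ‖h (2 ^ N) ^ 2 ^ N - 1‖ := by
    refine le_of_mul_le_mul_left ?_ hW.pos_one
    calc W 1 * 2 = W 1 * ‖(-1 : ℂ) - 1‖ := by norm_num
      _ ≤ W (h (2 ^ N)) * ‖h (2 ^ N) ^ 2 ^ N - 1‖ := hmax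
      _ ≤ W 1 * ‖h (2 ^ N) ^ 2 ^ N - 1‖ := by
        gcongr; exact hW.le_one _ (hh.norm_le_one _)
  refine Complex.eq_neg_one_of_norm_le_one_of_two_le_norm_sub_one ?_ h2
  rw [norm_pow]
  exact pow_le_one₀ (norm_nonneg _) (hh.norm_le_one _)

lemma rescale (hW : IsLejaWeight (N + 1) W) (hh : IsWeightedLejaUpTo W (2 ^ (N + 1)) h)
    (hfirst : (range (2 ^ N)).image h = nthRootsFinset (2 ^ N) (1 : ℂ)) :
    IsWeightedLejaUpTo (fun w => ‖w ^ 2 ^ N + 1‖ * W w) (2 ^ N)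
      (fun m => (h (2 ^ N))⁻¹ * h (2 ^ N + m)) := by
  set d := 2 ^ N
  set ρ := h d
  have hd : 0 < d := by positivity
  have hρ : ρ ^ d = -1 := hh.pow_eq_neg_one hW hfirst
  have hρ_norm : ‖ρ‖ = 1 := Complex.norm_eq_one_of_pow_eq_neg_one hd.ne' hρ
  have hρ0 : ρ ≠ 0 := by rintro h0; simp [h0] at hρ_norm
  have hsecond (m : ℕ) : h (d + m) = ρ * (ρ⁻¹ * h (d + m)) := by field_simp
  have key (j : ℕ) (w : ℂ) : W (ρ * w) * ∏ m ∈ range (d + j), ‖ρ * w - h m‖ =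
      ‖w ^ d + 1‖ * W w * ∏ m ∈ range j, ‖w - ρ⁻¹ * h (d + m)‖ := by
    have hW_rot : W (ρ * w) = W w :=
      hW.mul_root ρ w (by rw [pow_succ, pow_mul, hρ]; norm_num)
    have hfirst_prod : ‖(ρ * w) ^ d - 1‖ = ‖w ^ d + 1‖ := by
      rw [mul_pow, hρ, ← norm_neg]; ring_nf
    have hsecond_prod (m : ℕ) : ‖ρ * w - h (d + m)‖ = ‖w - ρ⁻¹ * h (d + m)‖ := by
      rw [hsecond m, ← mul_sub, norm_mul, hρ_norm, one_mul, ← hsecond m]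
    rw [prod_range_add, prod_norm_sub_eq_norm_pow_sub_one hd hfirst, hW_rot, hfirst_prod]
    simp only [hsecond_prod]
    ring
  refine ⟨by simp [hρ0, ρ], fun m => ?_, fun j hj hjd w hw => ?_⟩
  · simpa [hρ_norm] using hh.norm_le_one (d + m)
  · have hρw : ‖ρ * w‖ ≤ 1 := by rwa [norm_mul, hρ_norm, one_mul]
    have hmax := hh.maximal (d + j) (by omega) (by rw [pow_succ]; omega) (ρ * w) hρw
    rwa [hsecond j, key, key] at hmax

theorem image_range_eq_nthRootsFinset (hW : IsLejaWeight N W)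
    (hh : IsWeightedLejaUpTo W (2 ^ N) h) :
    (range (2 ^ N)).image h = nthRootsFinset (2 ^ N) (1 : ℂ) := by
  induction N generalizing W h with
  | zero => ext x; simp [mem_nthRootsFinset, hh.zero]
  | succ N ih =>
    set d := 2 ^ N
    have hd : 0 < d := by positivity
    have hfirst := ih (hW.mono N.le_succ) (hh.mono (Nat.pow_le_pow_right two_pos N.le_succ))
    have hsecond : (range d).image (fun m => (h d)⁻¹ * h (d + m)) = nthRootsFinset d (1 : ℂ) :=
      ih hW.mul_norm_pow_add_one (hh.rescale hW hfirst)
    have hρ : h d ^ d = -1 := hh.pow_eq_neg_one hW hfirst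
    have hρ0 : h d ≠ 0 := by rintro h0; simp [h0, zero_pow hd.ne'] at hρ
    calc (range (2 ^ (N + 1))).image h
        = (range d).image h ∪ (range d).image (fun m => h (d + m)) := by
          rw [pow_succ, mul_two, range_add, image_union, map_eq_image, image_image]; rfl
      _ = nthRootsFinset d (1 : ℂ) ∪ (nthRootsFinset d (1 : ℂ)).image (h d * ·) := by
          rw [hfirst, ← hsecond, image_image]
          congr 2
          funext m
          simp [hρ0]
      _ = nthRootsFinset (2 ^ (N + 1)) (1 : ℂ) := by
          rw [pow_succ', nthRootsFinset_two_mul hd hρ]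

end IsWeightedLejaUpTo

lemma IsLejaSeq.isWeightedLejaUpTo {e : ℕ → ℂ} (he : IsLejaSeq e) (N : ℕ) :
    IsWeightedLejaUpTo (fun _ => 1) N e :=
  ⟨he.1, he.2.1, fun j hj _ z hz => by simpa using he.2.2 j hj z hz⟩

theorem IsLejaSeq.image_range_two_pow {e : ℕ → ℂ} (he : IsLejaSeq e) (N : ℕ) :
    (range (2 ^ N)).image e = nthRootsFinset (2 ^ N) (1 : ℂ) :=
  (he.isWeightedLejaUpTo _).image_range_eq_nthRootsFinset (IsLejaWeight.const_one N)

theorem re_leja_section_eq_lobatto (e : ℕ → ℂ) (he : IsLejaSeq e) (n : ℕ) :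
    (Finset.range (2 ^ (n + 1))).image (fun k => (e k).re) =
      (Finset.range (2 ^ n + 1)).image (fun j : ℕ => Real.cos (j * π / 2 ^ n)) ∧
    ((Finset.range (2 ^ (n + 1))).image (fun k => (e k).re)).card = 2 ^ n + 1 := by
  have hre : (range (2 ^ (n + 1))).image (fun k => (e k).re) =
      (range (2 ^ n + 1)).image (fun j : ℕ => cos (j * π / 2 ^ n)) := by
    calc (range (2 ^ (n + 1))).image (fun k => (e k).re)
        = ((range (2 ^ (n + 1))).image e).image Complex.re := image_image.symm
      _ = (nthRootsFinset (2 * 2 ^ n) (1 : ℂ)).image Complex.re := by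
          rw [he.image_range_two_pow, pow_succ']
      _ = _ := by
          rw [image_re_nthRootsFinset_two_mul (by positivity)]
          push_cast
          rfl
  refine ⟨hre, ?_⟩
  rw [hre]
  exact_mod_cast card_image_range_cos (m := 2 ^ n) (by positivity)
end

section
/- Let E be a Leja sequence for the unit disk and let 2^j ≤ k < 2^j + 2^{j−1} (j ≥ 1). Then Re(e_k) ∉ {Re(e_s) : 0 ≤ s ≤ k−1}; equivalently, e_k is not the conjugate of any earlier point e_s, s < k. -/
/-!
By induction on `t`, the points `e 0, …, e (t - 1)` are the roots of
`∏ i ∈ B, (z ^ 2 ^ i + e t ^ 2 ^ i)`, where `B` is the set of binary digits of `t`. Passing to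
`t + 1`, the product of distances to `e 0, …, e t` factors into terms `z ^ 2 ^ i + w ^ 2 ^ i` of
modulus at most `2`, one for each binary digit `i` of `t + 1`, with `|w| = 1`. The bound is attained
at `w`, so the next Leja point makes every factor equal to `2`: `e (t + 1) ^ 2 ^ i = w ^ 2 ^ i`.
For the lowest digit `v` of `t + 1` this reads `e (t + 1) ^ 2 ^ v = -e t ^ 2 ^ v`.

Hence `e s ^ 2 ^ j = 1` for `s < 2 ^ j`, while on `2 ^ j ≤ k < 2 ^ j + 2 ^ (j - 1)` the power
`e k ^ 2 ^ (j - 1)` is a constant `τ` with `τ ^ 2 = -1`, so it is not real. Either way `e k` cannot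
be the conjugate of an earlier point; and since the points are distinct and unimodular, a common real
part would force `e k = e s` or `e k = conj (e s)`.
-/

open Finset

theorem sum_two_pow_add_one_of_range_subset {B : Finset ℕ} {v : ℕ} (hv : range v ⊆ B) :
    ∑ i ∈ B, 2 ^ i + 1 = ∑ i ∈ B \ range v, 2 ^ i + 2 ^ v := by
  have hgeom := Nat.geomSum_eq le_rfl v
  simp only [Nat.add_one_sub_one, Nat.div_one] at hgeom
  have := Nat.one_le_two_pow (n := v)
  rw [← sum_sdiff hv, hgeom]
  omega

theorem two_pow_dvd_sum_two_pow_add_one {B : Finset ℕ} {v : ℕ} (hv : range v ⊆ B) :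
    2 ^ v ∣ ∑ i ∈ B, 2 ^ i + 1 := by
  rw [sum_two_pow_add_one_of_range_subset hv]
  refine dvd_add (dvd_sum fun i hi => pow_dvd_pow 2 ?_) dvd_rfl
  simpa using (mem_sdiff.mp hi).2

theorem pow_two_pow_eq_of_eq_neg {M : Type*} [Monoid M] [HasDistribNeg M] {x y : M} {v n : ℕ}
    (h : x ^ 2 ^ v = -y ^ 2 ^ v) (hvn : v < n) : x ^ 2 ^ n = y ^ 2 ^ n := by
  induction n, hvn using Nat.le_induction with
  | base => rw [pow_succ, pow_mul, pow_mul, h, neg_sq]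
  | succ n _ ih => rw [pow_succ, pow_mul, pow_mul, ih]

theorem sub_mul_prod_add_pow_two_pow {R : Type*} [CommRing R] {a w : R} {v : ℕ} {B : Finset ℕ}
    (hv : v ∉ B) (hsub : range v ⊆ B) (hw : w ^ 2 ^ v = -a ^ 2 ^ v) (z : R) :
    (z - a) * ∏ i ∈ B, (z ^ 2 ^ i + a ^ 2 ^ i) =
      ∏ i ∈ insert v (B \ range v), (z ^ 2 ^ i + w ^ 2 ^ i) := by
  have hhigh : ∀ i ∈ B \ range v, z ^ 2 ^ i + a ^ 2 ^ i = z ^ 2 ^ i + w ^ 2 ^ i := by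
    intro i hi
    obtain ⟨hiB, hiv⟩ := mem_sdiff.mp hi
    have hvi : v < i := lt_of_le_of_ne (by simpa using hiv) (by rintro rfl; exact hv hiB)
    rw [pow_two_pow_eq_of_eq_neg hw hvi]
  rw [prod_insert fun h => hv (mem_sdiff.mp h).1, ← prod_sdiff hsub, prod_congr rfl hhigh, hw,
    ← sub_eq_add_neg, pow_two_pow_sub_pow_two_pow]
  ring

theorem norm_add_lt_two_of_ne {E : Type*} [NormedAddCommGroup E] [NormedSpace ℝ E]
    [StrictConvexSpace ℝ E] {x y : E} (hx : ‖x‖ ≤ 1) (hy : ‖y‖ = 1) (hne : x ≠ y) :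
    ‖x + y‖ < 2 := by
  have hle : ‖x + y‖ ≤ ‖x‖ + ‖y‖ := norm_add_le x y
  refine lt_of_le_of_ne (by linarith) fun h2 => hne ?_
  exact eq_of_norm_eq_of_norm_add_eq (by linarith) (by linarith)

theorem eq_of_two_pow_le_prod_norm_add {ι E : Type*} [NormedAddCommGroup E] [NormedSpace ℝ E]
    [StrictConvexSpace ℝ E] {s : Finset ι} {x y : ι → E} (hx : ∀ i ∈ s, ‖x i‖ ≤ 1)
    (hy : ∀ i ∈ s, ‖y i‖ = 1) (h : 2 ^ #s ≤ ∏ i ∈ s, ‖x i + y i‖) : ∀ i ∈ s, x i = y i := by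
  by_contra! ⟨i, hi, hne⟩
  have hprod_ne : ∏ i ∈ s, ‖x i + y i‖ ≠ 0 := (lt_of_lt_of_le (by positivity) h).ne'
  have hpos : ∀ i ∈ s, 0 < ‖x i + y i‖ := fun i hi =>
    (norm_nonneg _).lt_of_ne' (prod_ne_zero_iff.mp hprod_ne i hi)
  have hlt : ∏ i ∈ s, ‖x i + y i‖ < ∏ _i ∈ s, (2 : ℝ) := by
    refine prod_lt_prod hpos (fun i hi => ?_) ⟨i, hi, norm_add_lt_two_of_ne (hx i hi) (hy i hi) hne⟩
    linarith [norm_add_le (x i) (y i), hx i hi, hy i hi]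
  rw [prod_const] at hlt
  linarith

structure IsBinaryFactorization (e : ℕ → ℂ) (t : ℕ) (B : Finset ℕ) : Prop where
  sum_two_pow : ∑ i ∈ B, 2 ^ i = t
  norm_eq_one : ‖e t‖ = 1
  prod_sub_eq : ∀ z, ∏ m ∈ range t, (z - e m) = ∏ i ∈ B, (z ^ 2 ^ i + e t ^ 2 ^ i)

namespace IsLejaSeq

variable {e : ℕ → ℂ}

theorem exists_factorization_succ (he : IsLejaSeq e) {t : ℕ} {B : Finset ℕ}
    (hB : IsBinaryFactorization e t B) :
    ∃ v, 2 ^ v ∣ t + 1 ∧ e (t + 1) ^ 2 ^ v = -e t ^ 2 ^ v ∧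
      IsBinaryFactorization e (t + 1) (insert v (B \ range v)) := by
  classical
  have hex := Infinite.exists_notMem_finset B
  set v := Nat.find hex
  have hv : v ∉ B := Nat.find_spec hex
  have hsub : range v ⊆ B := fun i hi => not_not.mp (Nat.find_min hex (mem_range.mp hi))
  set B' := insert v (B \ range v)
  obtain ⟨ξ, hξ⟩ := IsAlgClosed.exists_pow_nat_eq (-1 : ℂ) (pow_pos two_pos v)
  have hξnorm : ‖ξ‖ = 1 := by
    rw [← pow_eq_one_iff_of_nonneg (norm_nonneg ξ) (pow_pos two_pos v).ne', ← norm_pow, hξ,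
      norm_neg, norm_one]
  -- at `w` every factor has the largest possible modulus `2`
  set w := e t * ξ
  have hw : w ^ 2 ^ v = -e t ^ 2 ^ v := by rw [mul_pow, hξ, mul_neg_one]
  have hwnorm : ‖w‖ = 1 := by rw [norm_mul, hB.norm_eq_one, hξnorm, one_mul]
  have hprod : ∀ z, ∏ m ∈ range (t + 1), (z - e m) = ∏ i ∈ B', (z ^ 2 ^ i + w ^ 2 ^ i) := by
    intro z
    rw [prod_range_succ, hB.prod_sub_eq, mul_comm, sub_mul_prod_add_pow_two_pow hv hsub hw]
  have hmax : 2 ^ #B' ≤ ∏ i ∈ B', ‖e (t + 1) ^ 2 ^ i + w ^ 2 ^ i‖ := calc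
    (2 : ℝ) ^ #B' = ∏ i ∈ B', ‖w ^ 2 ^ i + w ^ 2 ^ i‖ := by
      rw [← prod_const]
      refine prod_congr rfl fun i _ => ?_
      rw [← two_mul, norm_mul, norm_pow, hwnorm]
      norm_num
    _ = ∏ m ∈ range (t + 1), ‖w - e m‖ := by rw [← norm_prod, ← norm_prod, hprod]
    _ ≤ ∏ m ∈ range (t + 1), ‖e (t + 1) - e m‖ := he.2.2 _ t.succ_pos w hwnorm.le
    _ = _ := by rw [← norm_prod, ← norm_prod, hprod]
  have hpow : ∀ i ∈ B', e (t + 1) ^ 2 ^ i = w ^ 2 ^ i :=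
    eq_of_two_pow_le_prod_norm_add
      (fun i _ => by rw [norm_pow]; exact pow_le_one₀ (norm_nonneg _) (he.2.1 _))
      (fun i _ => by rw [norm_pow, hwnorm, one_pow]) hmax
  have hpow_v : e (t + 1) ^ 2 ^ v = w ^ 2 ^ v := hpow v (mem_insert_self v _)
  refine ⟨v, hB.sum_two_pow ▸ two_pow_dvd_sum_two_pow_add_one hsub, hpow_v.trans hw, ?_, ?_, ?_⟩
  · rw [sum_insert fun h => hv (mem_sdiff.mp h).1, ← hB.sum_two_pow,
      sum_two_pow_add_one_of_range_subset hsub, add_comm]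
  · rw [← pow_eq_one_iff_of_nonneg (norm_nonneg _) (pow_pos two_pos v).ne', ← norm_pow, hpow_v,
      norm_pow, hwnorm, one_pow]
  · intro z
    rw [hprod]
    exact prod_congr rfl fun i hi => by rw [hpow i hi]

theorem exists_factorization (he : IsLejaSeq e) (t : ℕ) :
    ∃ B, IsBinaryFactorization e t B := by
  induction t with
  | zero => exact ⟨∅, by simp, by simp [he.1], by simp⟩
  | succ t ih =>
    obtain ⟨B, hB⟩ := ih
    obtain ⟨v, -, -, hB'⟩ := he.exists_factorization_succ hB
    exact ⟨_, hB'⟩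

theorem norm_eq_one (he : IsLejaSeq e) (k : ℕ) : ‖e k‖ = 1 :=
  (he.exists_factorization k).choose_spec.norm_eq_one

theorem injective (he : IsLejaSeq e) : Function.Injective e := by
  suffices ∀ {s k}, s < k → e k ≠ e s by
    intro s k hsk
    by_contra hne
    rcases lt_or_gt_of_ne hne with h | h
    exacts [this h hsk.symm, this h hsk]
  intro s k hsk heq
  obtain ⟨B, hB⟩ := he.exists_factorization k
  have hzero : ∏ m ∈ range k, (e k - e m) = 0 := prod_eq_zero (mem_range.mpr hsk) (by simp [heq])
  rw [hB.prod_sub_eq, prod_eq_zero_iff] at hzero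
  obtain ⟨i, -, hi⟩ := hzero
  have hek : e k ≠ 0 := norm_ne_zero_iff.mp (by simp [hB.norm_eq_one])
  exact mul_ne_zero two_ne_zero (pow_ne_zero _ hek) (by rw [two_mul]; exact hi)

theorem factorization_two_pow (he : IsLejaSeq e) (n : ℕ) :
    IsBinaryFactorization e (2 ^ n) {n} := by
  obtain ⟨B, hB⟩ := he.exists_factorization (2 ^ n)
  obtain rfl : B = {n} := geomSum_injective le_rfl (by simpa using hB.sum_two_pow)
  exact hB

theorem apply_two_pow_pow_eq_neg_one (he : IsLejaSeq e) (n : ℕ) : e (2 ^ n) ^ 2 ^ n = -1 := by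
  have h := (he.factorization_two_pow n).prod_sub_eq 1
  rw [prod_eq_zero (mem_range.mpr (pow_pos two_pos n)) (by rw [he.1, sub_self]), prod_singleton,
    one_pow] at h
  linear_combination -h

theorem prod_range_two_pow_sub (he : IsLejaSeq e) (n : ℕ) (z : ℂ) :
    ∏ m ∈ range (2 ^ n), (z - e m) = z ^ 2 ^ n - 1 := by
  rw [(he.factorization_two_pow n).prod_sub_eq, prod_singleton, he.apply_two_pow_pow_eq_neg_one,
    sub_eq_add_neg]

theorem apply_pow_two_pow_eq_one_of_lt (he : IsLejaSeq e) {n m : ℕ} (hm : m < 2 ^ n) :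
    e m ^ 2 ^ n = 1 := by
  have h := he.prod_range_two_pow_sub n (e m)
  rw [prod_eq_zero (mem_range.mpr hm) (sub_self _)] at h
  linear_combination -h

theorem pow_two_pow_succ_eq (he : IsLejaSeq e) {n t : ℕ} (h1 : 2 ^ (n + 1) ≤ t)
    (h2 : t + 1 < 2 ^ (n + 1) + 2 ^ n) : e (t + 1) ^ 2 ^ n = e t ^ 2 ^ n := by
  obtain ⟨B, hB⟩ := he.exists_factorization t
  obtain ⟨v, hdvd, hneg, -⟩ := he.exists_factorization_succ hB
  refine pow_two_pow_eq_of_eq_neg hneg (lt_of_not_ge fun hnv => ?_)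
  -- `t + 1` lies strictly between `2 * 2 ^ n` and `3 * 2 ^ n`, so it is no multiple of `2 ^ n`
  obtain ⟨c, hc⟩ := (pow_dvd_pow 2 hnv).trans hdvd
  rw [pow_succ, hc] at h2
  rw [pow_succ] at h1
  have hc2 : 2 < c := Nat.lt_of_mul_lt_mul_left (a := 2 ^ n) (by omega)
  have hc3 : c < 3 := Nat.lt_of_mul_lt_mul_left (a := 2 ^ n) (by omega)
  omega

theorem pow_two_pow_eq_of_mem_Ico (he : IsLejaSeq e) {n k : ℕ} (h1 : 2 ^ (n + 1) ≤ k)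
    (h2 : k < 2 ^ (n + 1) + 2 ^ n) : e k ^ 2 ^ n = e (2 ^ (n + 1)) ^ 2 ^ n := by
  induction k, h1 using Nat.le_induction with
  | base => rfl
  | succ t ht ih => rw [he.pow_two_pow_succ_eq ht h2, ih (by omega)]

theorem ne_conj_of_lt (he : IsLejaSeq e) {n s k : ℕ} (h1 : 2 ^ (n + 1) ≤ k)
    (h2 : k < 2 ^ (n + 1) + 2 ^ n) (hs : s < k) : e k ≠ starRingEnd ℂ (e s) := by
  intro heq
  set τ := e (2 ^ (n + 1)) ^ 2 ^ n
  have hτ : τ ^ 2 = -1 := by rw [← pow_mul, ← pow_succ, he.apply_two_pow_pow_eq_neg_one]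
  have hk : e k ^ 2 ^ n = τ := he.pow_two_pow_eq_of_mem_Ico h1 h2
  rcases lt_or_ge s (2 ^ (n + 1)) with hs_lt | hs_ge
  · have h : (-1 : ℂ) = 1 := by
      rw [← hτ, ← hk, ← pow_mul, ← pow_succ, heq, ← map_pow,
        he.apply_pow_two_pow_eq_one_of_lt hs_lt, map_one]
    norm_num at h
  · have hreal : starRingEnd ℂ τ = τ := calc
      starRingEnd ℂ τ = starRingEnd ℂ (e s ^ 2 ^ n) := by
        rw [he.pow_two_pow_eq_of_mem_Ico hs_ge (hs.trans h2)]
      _ = τ := by rw [map_pow, ← heq, hk]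
    obtain ⟨r, hr⟩ := Complex.conj_eq_iff_real.mp hreal
    have hr2 : r ^ 2 = -1 := by exact_mod_cast hr ▸ hτ
    nlinarith [sq_nonneg r]

end IsLejaSeq

theorem Complex.eq_or_eq_conj_of_re_eq {z w : ℂ} (hn : ‖z‖ = ‖w‖) (hre : z.re = w.re) :
    z = w ∨ z = starRingEnd ℂ w := by
  have him : z.im ^ 2 = w.im ^ 2 := by
    have h := congrArg (· ^ 2) hn
    simp only [Complex.sq_norm, Complex.normSq_apply, hre] at h
    linarith
  rcases sq_eq_sq_iff_eq_or_eq_neg.mp him with h | h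
  · exact .inl (Complex.ext hre h)
  · exact .inr (Complex.ext (by simpa using hre) (by simpa using h))

theorem re_new_point (e : ℕ → ℂ) (he : IsLejaSeq e) (j k : ℕ) (hj : 1 ≤ j)
    (hk1 : 2 ^ j ≤ k) (hk2 : k < 2 ^ j + 2 ^ (j - 1)) :
    (∀ s, s < k → (e k).re ≠ (e s).re) ∧
    (∀ s, s < k → e k ≠ (starRingEnd ℂ) (e s)) := by
  obtain ⟨n, rfl⟩ : ∃ n, j = n + 1 := ⟨j - 1, by omega⟩
  rw [Nat.add_sub_cancel] at hk2
  have hconj : ∀ s, s < k → e k ≠ starRingEnd ℂ (e s) := fun s hs => he.ne_conj_of_lt hk1 hk2 hs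
  refine ⟨fun s hs hre => ?_, hconj⟩
  rcases Complex.eq_or_eq_conj_of_re_eq (by rw [he.norm_eq_one, he.norm_eq_one]) hre with h | h
  exacts [hs.ne' (he.injective h), hconj s hs h]
end

section
/- If β = (2τ+1)π/2^{n+1} + 2τ'π/2^n for integers τ, τ' and n ≥ 0, then |sin(2^n β)| = 1 and |sin β| ≥ sin(π/2^{n+1}); consequently |sin β · sin(2^n β)| ≥ sin(π/2^{n+1}). -/
/-!
Write `β = m π / 2 ^ (n + 1)` with `m = 2 (τ + 2 τ') + 1` odd. Then `2 ^ n β = π / 2 + (τ + 2 τ') π`,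
so `|sin (2 ^ n β)| = 1`. For the lower bound, `m` is not a multiple of `N = 2 ^ (n + 1)`; reducing it
modulo `N` changes `sin β` only by a sign and leaves an angle `r π / N` with `1 ≤ r ≤ N - 1`, i.e. in
`[π / N, π - π / N]`, where `sin` is at least `sin (π / N)`.
-/

open Real

theorem Real.sin_le_sin_of_le_of_le_pi_sub {x y : ℝ} (hx : 0 ≤ x) (hxy : x ≤ y)
    (hy : y ≤ π - x) : sin x ≤ sin y := by
  rcases le_or_gt y (π / 2) with hy' | hy'
  · exact sin_le_sin_of_le_of_le_pi_div_two (by linarith) hy' hxy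
  · rw [← sin_pi_sub y]
    exact sin_le_sin_of_le_of_le_pi_div_two (by linarith) (by linarith) (by linarith)

theorem Real.abs_sin_add_int_mul_pi (x : ℝ) (q : ℤ) : |sin (x + q * π)| = |sin x| := by
  rw [sin_add_int_mul_pi, abs_mul, abs_neg_one_zpow, one_mul]

theorem Real.sin_pi_div_le_abs_sin_int_mul_pi_div (N : ℕ) {k : ℤ} (hk : ¬ (N : ℤ) ∣ k) :
    sin (π / N) ≤ |sin (k * π / N)| := by
  rcases N.eq_zero_or_pos with rfl | hN
  · simp
  have hN' : (0 : ℝ) < N := by exact_mod_cast hN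
  set r := k % N
  have hr0 : 0 < r :=
    (Int.emod_nonneg k (by omega)).lt_of_ne fun h => hk (Int.dvd_of_emod_eq_zero h.symm)
  have hrN : r < N := Int.emod_lt_of_pos k (by omega)
  have hr0' : (1 : ℝ) ≤ r := by exact_mod_cast hr0
  have hrN' : (r : ℝ) + 1 ≤ N := by exact_mod_cast hrN
  have hkr : k * π / N = r * (π / N) + (k / N : ℤ) * π := by
    have hdiv : (k : ℝ) = r + N * (k / N : ℤ) := by
      exact_mod_cast (Int.emod_add_mul_ediv k N).symm
    rw [hdiv]
    field_simp
  have hpiN : 0 < π / N := by positivity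
  have hrx : r * (π / N) ≤ π - π / N := by
    calc r * (π / N) ≤ (N - 1) * (π / N) := by gcongr; linarith
    _ = π - π / N := by field_simp
  rw [hkr, abs_sin_add_int_mul_pi,
    abs_of_nonneg (sin_nonneg_of_nonneg_of_le_pi (by positivity) (by linarith))]
  exact sin_le_sin_of_le_of_le_pi_sub hpiN.le (le_mul_of_one_le_left hpiN.le hr0') hrx

theorem sin_bounds_of_special_angle (n : ℕ) (τ τ' : ℤ)
    (β : ℝ) (hβ : β = (2 * τ + 1) * π / 2 ^ (n + 1) + 2 * τ' * π / 2 ^ n) :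
    |Real.sin ((2 : ℝ) ^ n * β)| = 1 ∧
    Real.sin (π / 2 ^ (n + 1)) ≤ |Real.sin β| ∧
    Real.sin (π / 2 ^ (n + 1)) ≤ |Real.sin β * Real.sin ((2 : ℝ) ^ n * β)| := by
  have hsin_pow : |sin ((2 : ℝ) ^ n * β)| = 1 :=
    abs_sin_eq_one_iff.2 ⟨τ + 2 * τ', by rw [hβ]; push_cast; field_simp; ring⟩
  set m : ℤ := 2 * (τ + 2 * τ') + 1
  have hβm : β = m * π / ((2 ^ (n + 1) : ℕ) : ℝ) := by
    rw [hβ]; push_cast [m]; field_simp; ring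
  have hm : ¬ ((2 ^ (n + 1) : ℕ) : ℤ) ∣ m := fun h => by
    have h2 : (2 : ℤ) ∣ m := (dvd_pow_self 2 n.succ_ne_zero).trans (by exact_mod_cast h)
    omega
  have hsin : sin (π / 2 ^ (n + 1)) ≤ |sin β| := by
    have h := sin_pi_div_le_abs_sin_int_mul_pi_div _ hm
    rwa [← hβm, Nat.cast_pow, Nat.cast_ofNat] at h
  refine ⟨hsin_pow, hsin, ?_⟩
  rwa [abs_mul, hsin_pow, mul_one]
end
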